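/- arXiv:2104.08669 — 2 statements merged into one kernel-verified Lean document; each statement's English description precedes it below -/
import Mathlib

section
/- (F11 folding) Any 2n×2n real symmetric positive definite matrix A is congruent, by a realified complex matrix, to a block diagonal matrix diag(Σ, Σ⁻¹): there exist X, Y ∈ ℝ^{n×n} with X + iY invertible and a positive diagonal Σ such that A = Wᵀ diag(Σ, Σ⁻¹) W, where W = [[X, Y], [−Y, X]]. -/
/-!
Factor `A = Bᵀ B`. Then `N = B J B⁻¹` is a complex structure (`N² = -1`), and it suffices to find
`P` with `N P = P J` and `Pᵀ P = diag(Σ, Σ⁻¹)`: the matrix `G = B⁻¹ P` then commutes with `J` and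
satisfies `Gᵀ A G = diag(Σ, Σ⁻¹)`, so `W = G⁻¹` is a realified complex matrix with
`A = Wᵀ diag(Σ, Σ⁻¹) W`. Mathlib's `Matrix.J` is `[[0, -I], [I, 0]] = -J_n`, which has the same
commutant.

The columns of `P` are `g₁, …, gₙ, N g₁, …, N gₙ`, where the `gᵢ` are orthonormal eigenvectors of
`N†N`, isotropic for `ω(x, y) = ⟪x, N y⟫`, rescaled so that `‖gᵢ‖ ‖N gᵢ‖ = 1`. They are chosen one
at a time: if `N†N g = μ g` then `N† g = -μ⁻¹ N g`, so the orthogonal complement of the span of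
the `gᵢ, N gᵢ` is invariant under `N` and `N†`, hence under the symmetric operator `N†N`, which
therefore has a unit eigenvector `u` there; and `u` is isotropic since `(1 + μ) ⟪u, N u⟫ = 0`.
-/

open Matrix Module Module.End LinearMap
open scoped RealInnerProductSpace

section ComplexStructure

variable {R M ι : Type*} [Ring R] [AddCommGroup M] [Module R M] {N : Module.End R M}

theorem apply_apply_eq_neg (hN : N * N = -1) (v : M) : N (N v) = -v := by
  simpa using LinearMap.congr_fun hN v

theorem apply_ne_zero_of_mul_self_eq_neg_one (hN : N * N = -1) {v : M} (hv : v ≠ 0) : N v ≠ 0 :=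
  fun h ↦ hv <| by simpa [h] using (apply_apply_eq_neg hN v).symm

def complexSpan (N : Module.End R M) (g : ι → M) : Submodule R M :=
  Submodule.span R (Set.range (Sum.elim g (N ∘ g)))

theorem mem_complexSpan (N : Module.End R M) (g : ι → M) (i : ι) : g i ∈ complexSpan N g :=
  Submodule.subset_span ⟨Sum.inl i, rfl⟩

theorem apply_mem_complexSpan (N : Module.End R M) (g : ι → M) (i : ι) :
    N (g i) ∈ complexSpan N g :=
  Submodule.subset_span ⟨Sum.inr i, rfl⟩

theorem finrank_complexSpan_le [StrongRankCondition R] [Fintype ι] (N : Module.End R M)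
    (g : ι → M) : finrank R (complexSpan N g) ≤ 2 * Fintype.card ι :=
  (finrank_range_le_card (R := R) (Sum.elim g (N ∘ g))).trans (by simp [two_mul])

theorem complexSpan_mem_invtSubmodule (hN : N * N = -1) (g : ι → M) :
    complexSpan N g ∈ invtSubmodule N := by
  refine Submodule.span_le.2 ?_
  rintro _ ⟨i | i, rfl⟩
  · exact apply_mem_complexSpan N g i
  · simpa [apply_apply_eq_neg hN] using mem_complexSpan N g i

end ComplexStructure

section Eigenvector

variable {𝕜 E : Type*} [RCLike 𝕜] [NormedAddCommGroup E] [InnerProductSpace 𝕜 E]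
  [FiniteDimensional 𝕜 E]

theorem LinearMap.IsSymmetric.exists_eigenvector_mem {T : E →ₗ[𝕜] E} (hT : T.IsSymmetric)
    {K : Submodule 𝕜 E} (hK : K ∈ invtSubmodule T) (hK0 : K ≠ ⊥) :
    ∃ v ∈ K, ‖v‖ = 1 ∧ ∃ μ : 𝕜, T v = μ • v := by
  have : Nontrivial K := Submodule.nontrivial_iff_ne_bot.2 hK0
  obtain ⟨μ, hμ⟩ : ∃ μ, HasEigenvalue (T.restrict hK) μ :=
    ⟨_, (hT.restrict_invariant hK).hasEigenvalue_iSup_of_finiteDimensional⟩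
  obtain ⟨v, hv⟩ := hμ.exists_hasEigenvector
  have hv0 : (v : E) ≠ 0 := by simpa using hv.2
  have hTv : T v = μ • (v : E) := congrArg Subtype.val hv.apply_eq_smul
  refine ⟨(‖(v : E)‖⁻¹ : 𝕜) • v, K.smul_mem _ v.2, norm_smul_inv_norm hv0, μ, ?_⟩
  rw [map_smul, hTv, smul_comm]

end Eigenvector

section InnerProductSpace

variable {E ι : Type*} [NormedAddCommGroup E] [InnerProductSpace ℝ E] [FiniteDimensional ℝ E]
  {N : E →ₗ[ℝ] E}

theorem adjoint_mul_adjoint_eq_neg_one (hN : N * N = -1) : N.adjoint * N.adjoint = -1 :=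
  calc N.adjoint * N.adjoint = (N * N).adjoint := (adjoint_comp N N).symm
    _ = -1 := by rw [hN, map_neg, adjoint_one]

theorem smul_adjoint_apply_eq_neg_apply (hN : N * N = -1) {v : E} {μ : ℝ}
    (hv : (N.adjoint * N) v = μ • v) : μ • N.adjoint v = -N v := by
  rw [← map_smul, ← hv, ← Module.End.mul_apply, ← mul_assoc, adjoint_mul_adjoint_eq_neg_one hN]
  simp

theorem pos_of_adjoint_mul_self_apply_eq_smul (hN : N * N = -1) {v : E} {μ : ℝ} (hv0 : v ≠ 0)
    (hv : (N.adjoint * N) v = μ • v) : 0 < μ := by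
  have h : μ * ‖v‖ ^ 2 = ‖N v‖ ^ 2 := by
    rw [← real_inner_self_eq_norm_sq, ← real_inner_self_eq_norm_sq, ← inner_smul_right, ← hv,
      Module.End.mul_apply, adjoint_inner_right]
  have hNv : 0 < ‖N v‖ ^ 2 := by
    have := apply_ne_zero_of_mul_self_eq_neg_one hN hv0
    positivity
  exact pos_of_mul_pos_left (h ▸ hNv) (sq_nonneg _)

theorem inner_apply_self_eq_zero_of_adjoint_mul_self_apply_eq_smul (hN : N * N = -1) {v : E}
    {μ : ℝ} (hv0 : v ≠ 0) (hv : (N.adjoint * N) v = μ • v) : ⟪v, N v⟫ = 0 := by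
  have h : μ * ⟪v, N v⟫ = -⟪v, N v⟫ :=
    calc μ * ⟪v, N v⟫ = ⟪μ • N.adjoint v, v⟫ := by rw [real_inner_smul_left, adjoint_inner_left]
      _ = -⟪v, N v⟫ := by
        rw [smul_adjoint_apply_eq_neg_apply hN hv, inner_neg_left, real_inner_comm]
  nlinarith [pos_of_adjoint_mul_self_apply_eq_smul hN hv0 hv]

structure IsIsotropicEigenfamily (N : E →ₗ[ℝ] E) (g : ι → E) : Prop where
  orthonormal : Orthonormal ℝ g
  isotropic : ∀ i j, ⟪g i, N (g j)⟫ = 0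
  eigen : ∀ i, ∃ μ : ℝ, (N.adjoint * N) (g i) = μ • g i

theorem IsIsotropicEigenfamily.complexSpan_mem_invtSubmodule_adjoint {g : ι → E}
    (hN : N * N = -1) (hg : IsIsotropicEigenfamily N g) :
    complexSpan N g ∈ invtSubmodule N.adjoint := by
  refine Submodule.span_le.2 ?_
  rintro _ ⟨i | i, rfl⟩ <;> obtain ⟨μ, hμ⟩ := hg.eigen i
  · have hμ0 := (pos_of_adjoint_mul_self_apply_eq_smul hN (hg.orthonormal.ne_zero i) hμ).ne'
    have : N.adjoint (g i) = (-μ⁻¹) • N (g i) := by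
      rw [neg_smul, ← smul_neg, ← smul_adjoint_apply_eq_neg_apply hN hμ, inv_smul_smul₀ hμ0]
    simpa [this] using Submodule.smul_mem _ (-μ⁻¹) (apply_mem_complexSpan N g i)
  · simpa [← Module.End.mul_apply, hμ] using Submodule.smul_mem _ μ (mem_complexSpan N g i)

theorem IsIsotropicEigenfamily.inner_apply_apply_of_ne {g : ι → E}
    (hg : IsIsotropicEigenfamily N g) {i j : ι} (hij : i ≠ j) : ⟪N (g i), N (g j)⟫ = 0 := by
  obtain ⟨μ, hμ⟩ := hg.eigen j
  rw [← adjoint_inner_right, ← Module.End.mul_apply, hμ, inner_smul_right,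
    hg.orthonormal.inner_eq_zero hij, mul_zero]

theorem IsIsotropicEigenfamily.snoc {k : ℕ} {g : Fin k → E} {u : E}
    (hg : IsIsotropicEigenfamily N g) (hu : ‖u‖ = 1) (hgu : ∀ i, ⟪g i, u⟫ = 0)
    (hgNu : ∀ i, ⟪g i, N u⟫ = 0) (huNg : ∀ i, ⟪u, N (g i)⟫ = 0) (huNu : ⟪u, N u⟫ = 0)
    (hμ : ∃ μ : ℝ, (N.adjoint * N) u = μ • u) :
    IsIsotropicEigenfamily N (Fin.snoc g u : Fin (k + 1) → E) where
  orthonormal := by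
    rw [orthonormal_iff_ite]
    intro i j
    induction i using Fin.lastCases <;> induction j using Fin.lastCases <;>
      simp [hu, hgu, fun i ↦ (real_inner_comm (g i) u).trans (hgu i), (Fin.castSucc_lt_last _).ne,
        (Fin.castSucc_lt_last _).ne', orthonormal_iff_ite.1 hg.orthonormal]
  isotropic i j := by
    induction i using Fin.lastCases <;> induction j using Fin.lastCases <;>
      simp [huNu, hgNu, huNg, hg.isotropic]
  eigen i := by
    induction i using Fin.lastCases with
    | last => simpa only [Fin.snoc_last] using hμ
    | cast i => simpa only [Fin.snoc_castSucc] using hg.eigen i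

theorem IsIsotropicEigenfamily.exists_snoc (hN : N * N = -1) {k : ℕ} {g : Fin k → E}
    (hg : IsIsotropicEigenfamily N g) (hk : 2 * k < finrank ℝ E) :
    ∃ u, IsIsotropicEigenfamily N (Fin.snoc g u : Fin (k + 1) → E) := by
  have hW : (complexSpan N g)ᗮ ≠ ⊥ := by
    rw [Ne, Submodule.orthogonal_eq_bot_iff]
    intro h
    have := finrank_complexSpan_le N g
    rw [h, finrank_top, Fintype.card_fin] at this
    omega
  have hWN : (complexSpan N g)ᗮ ∈ invtSubmodule N :=
    mem_invtSubmodule_adjoint_iff.1 (hg.complexSpan_mem_invtSubmodule_adjoint hN)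
  have hWN' : (complexSpan N g)ᗮ ∈ invtSubmodule N.adjoint :=
    mem_invtSubmodule_adjoint_iff.1 <| by
      rw [adjoint_adjoint]; exact complexSpan_mem_invtSubmodule hN g
  obtain ⟨u, huW, hu, μ, hμ⟩ :=
    (isSymmetric_adjoint_mul_self N).exists_eigenvector_mem (invtSubmodule.comp _ hWN' hWN) hW
  have hNuW : N u ∈ (complexSpan N g)ᗮ := hWN huW
  refine ⟨u, hg.snoc hu (fun i ↦ ?_) (fun i ↦ ?_) (fun i ↦ ?_) ?_ ⟨μ, hμ⟩⟩
  · exact Submodule.inner_right_of_mem_orthogonal (mem_complexSpan N g i) huW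
  · exact Submodule.inner_right_of_mem_orthogonal (mem_complexSpan N g i) hNuW
  · exact Submodule.inner_left_of_mem_orthogonal (apply_mem_complexSpan N g i) huW
  · exact inner_apply_self_eq_zero_of_adjoint_mul_self_apply_eq_smul hN
      (norm_ne_zero_iff.1 (by simp [hu])) hμ

theorem exists_isIsotropicEigenfamily (hN : N * N = -1) :
    ∀ k, 2 * k ≤ finrank ℝ E → ∃ g : Fin k → E, IsIsotropicEigenfamily N g
  | 0, _ => ⟨Fin.elim0, ⟨⟨finZeroElim, finZeroElim⟩, finZeroElim, finZeroElim⟩⟩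
  | k + 1, hk => by
    obtain ⟨g, hg⟩ := exists_isIsotropicEigenfamily hN k (by omega)
    obtain ⟨u, hu⟩ := hg.exists_snoc hN (by omega)
    exact ⟨_, hu⟩

theorem exists_gram_eq_fromBlocks (hN : N * N = -1) {n : ℕ} (hn : 2 * n ≤ finrank ℝ E) :
    ∃ (g : Fin n → E) (σ : Fin n → ℝ), (∀ i, 0 < σ i) ∧
      gram ℝ (Sum.elim g (N ∘ g)) = fromBlocks (diagonal σ) 0 0 (diagonal fun i ↦ (σ i)⁻¹) := by
  obtain ⟨g, hg⟩ := exists_isIsotropicEigenfamily hN n hn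
  have hNg : ∀ i, 0 < ‖N (g i)‖ := fun i ↦
    norm_pos_iff.2 (apply_ne_zero_of_mul_self_eq_neg_one hN (hg.orthonormal.ne_zero i))
  -- scaling `g i` by `√(σ i)` makes the norms of `g i` and `N (g i)` reciprocal
  set σ : Fin n → ℝ := fun i ↦ ‖N (g i)‖⁻¹
  refine ⟨fun i ↦ √(σ i) • g i, σ, fun i ↦ inv_pos.2 (hNg i), ?_⟩
  have hσ : ∀ i, √(σ i) * √(σ i) = σ i := fun i ↦ Real.mul_self_sqrt (inv_pos.2 (hNg i)).le
  have hNgg : ∀ i j, ⟪N (g i), g j⟫ = 0 := fun i j ↦ by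
    rw [real_inner_comm]; exact hg.isotropic j i
  have hNN : ∀ i j, ⟪N (g i), N (g j)⟫ = if i = j then ‖N (g i)‖ ^ 2 else 0 := fun i j ↦ by
    split_ifs with h
    · rw [h, real_inner_self_eq_norm_sq]
    · exact hg.inner_apply_apply_of_ne h
  ext (i | i) (j | j) <;>
    simp only [gram_apply, Sum.elim_inl, Sum.elim_inr, Function.comp_apply, map_smul,
      real_inner_smul_left, real_inner_smul_right, hg.isotropic, hNgg, hNN,
      orthonormal_iff_ite.1 hg.orthonormal, fromBlocks_apply₁₁, fromBlocks_apply₁₂,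
      fromBlocks_apply₂₁, fromBlocks_apply₂₂, diagonal_apply, Matrix.zero_apply, mul_zero]
  all_goals split_ifs with h <;> simp only [h, ← mul_assoc, hσ, mul_one, mul_zero]
  rw [inv_inv, inv_mul_eq_div, sq, mul_self_div_self]

end InnerProductSpace

namespace Matrix

theorem exists_mul_eq_mul_J {ι : Type*} [Fintype ι] [DecidableEq ι]
    (N : Matrix ι ι ℝ) (hN : N * N = -1) {n : ℕ} (hn : 2 * n ≤ Fintype.card ι) :
    ∃ (P : Matrix ι (Fin n ⊕ Fin n) ℝ) (σ : Fin n → ℝ), (∀ i, 0 < σ i) ∧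
      N * P = P * J (Fin n) ℝ ∧
      Pᵀ * P = fromBlocks (diagonal σ) 0 0 (diagonal fun i ↦ (σ i)⁻¹) := by
  set L := toLpLinAlgEquiv 2 N
  have hL : L * L = -1 := by rw [← map_mul, hN, map_neg, map_one]
  obtain ⟨g, σ, hσ, hgram⟩ := exists_gram_eq_fromBlocks hL (by rwa [finrank_euclideanSpace])
  set e := Sum.elim g (L ∘ g)
  set P : Matrix ι (Fin n ⊕ Fin n) ℝ := of fun r q ↦ e q r
  refine ⟨P, σ, hσ, ?_, ?_⟩
  · have hNP : ∀ r q, (N * P) r q = L (e q) r := fun r q ↦ by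
      simp [P, L, mul_apply, mulVec, dotProduct]
    ext r (q | q) <;>
      simp [hNP, apply_apply_eq_neg hL, e, P, mul_apply, J, Fintype.sum_sum_type, one_apply]
  · rw [← hgram]
    ext p q
    simp [P, mul_apply, gram_apply, PiLp.inner_apply, mul_comm]

theorem exists_eq_fromBlocks_of_commute_J {l R : Type*} [Fintype l] [DecidableEq l] [CommRing R]
    {M : Matrix (l ⊕ l) (l ⊕ l) R} (h : Commute (J l R) M) :
    ∃ X Y, M = fromBlocks X Y (-Y) X := by
  have h' := h.eq
  rw [← fromBlocks_toBlocks M, J, fromBlocks_multiply, fromBlocks_multiply, fromBlocks_inj] at h'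
  simp only [zero_mul, neg_mul, one_mul, zero_add, add_zero, mul_neg, mul_one, mul_zero] at h'
  obtain ⟨h₂₁, h₂₂, -, -⟩ := h'
  refine ⟨M.toBlocks₁₁, M.toBlocks₁₂, ?_⟩
  calc M = fromBlocks M.toBlocks₁₁ M.toBlocks₁₂ M.toBlocks₂₁ M.toBlocks₂₂ :=
        (fromBlocks_toBlocks M).symm
    _ = _ := by rw [← h₂₁, neg_neg, neg_inj.1 h₂₂]

theorem isUnit_det_of_fromBlocks_mul_fromBlocks_eq_one {l : Type*} [Fintype l] [DecidableEq l]
    {X Y X' Y' : Matrix l l ℝ} (h : fromBlocks X' Y' (-Y') X' * fromBlocks X Y (-Y) X = 1) :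
    IsUnit (X.map Complex.ofReal + Complex.I • Y.map Complex.ofReal).det := by
  rw [fromBlocks_multiply, ← fromBlocks_one, fromBlocks_inj] at h
  obtain ⟨h₁, h₂, -, -⟩ := h
  set φ := (Complex.ofRealHom : ℝ →+* ℂ).mapMatrix (m := l)
  have hφ (M : Matrix l l ℝ) : M.map Complex.ofReal = φ M := rfl
  have key : (φ X' + Complex.I • φ Y') * (φ X + Complex.I • φ Y) = 1 :=
    calc _ = φ (X' * X + Y' * -Y) + Complex.I • φ (X' * Y + Y' * X) := by
          simp only [add_mul, mul_add, map_add, map_mul, map_neg, smul_mul_assoc, mul_smul_comm,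
            smul_smul, Complex.I_mul_I, mul_neg, smul_add, neg_smul, one_smul]
          abel
      _ = 1 := by rw [h₁, h₂]; simp
  rw [hφ, hφ]
  exact IsUnit.of_mul_eq_one_right _ (by rw [← det_mul, key, det_one])

theorem exists_eq_transpose_mul_mul_of_commute_J {l : Type*} [Fintype l] [DecidableEq l]
    {A D G : Matrix (l ⊕ l) (l ⊕ l) ℝ} (hG : IsUnit G) (hJG : Commute (J l ℝ) G)
    (hGAG : Gᵀ * A * G = D) :
    ∃ X Y : Matrix l l ℝ,
      IsUnit (X.map Complex.ofReal + Complex.I • Y.map Complex.ofReal).det ∧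
      A = (fromBlocks X Y (-Y) X)ᵀ * D * fromBlocks X Y (-Y) X := by
  obtain ⟨W, hGW, hJW⟩ : ∃ W, G * W = 1 ∧ Commute (J l ℝ) W :=
    ⟨_, hG.mul_val_inv, hJG.units_inv_right (u := hG.unit)⟩
  obtain ⟨X, Y, hW⟩ := exists_eq_fromBlocks_of_commute_J hJW
  obtain ⟨X', Y', hG'⟩ := exists_eq_fromBlocks_of_commute_J hJG
  refine ⟨X, Y, isUnit_det_of_fromBlocks_mul_fromBlocks_eq_one (hG' ▸ hW ▸ hGW), ?_⟩
  rw [← hW, ← hGAG]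
  calc A = (G * W)ᵀ * A * (G * W) := by rw [hGW, transpose_one, Matrix.one_mul, Matrix.mul_one]
    _ = Wᵀ * (Gᵀ * A * G) * W := by simp only [transpose_mul, Matrix.mul_assoc]

open scoped MatrixOrder in
theorem PosDef.exists_isUnit_eq_transpose_mul_self {ι : Type*} [Fintype ι] [DecidableEq ι]
    {A : Matrix ι ι ℝ} (hA : A.PosDef) : ∃ B, IsUnit B ∧ A = Bᵀ * B := by
  obtain ⟨B, hAB⟩ := CStarAlgebra.nonneg_iff_eq_star_mul_self.mp hA.posSemidef.nonneg
  rw [star_eq_conjTranspose, conjTranspose_eq_transpose_of_trivial] at hAB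
  have hdet := hA.det_pos
  rw [hAB, det_mul, det_transpose] at hdet
  exact ⟨B, (isUnit_iff_isUnit_det B).2 (isUnit_iff_ne_zero.2 fun h ↦ by simp [h] at hdet), hAB⟩

theorem PosDef.exists_commute_J_transpose_mul_mul_eq {n : ℕ}
    {A : Matrix (Fin n ⊕ Fin n) (Fin n ⊕ Fin n) ℝ} (hA : A.PosDef) :
    ∃ (G : Matrix (Fin n ⊕ Fin n) (Fin n ⊕ Fin n) ℝ) (σ : Fin n → ℝ), (∀ i, 0 < σ i) ∧
      IsUnit G ∧ Commute (J (Fin n) ℝ) G ∧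
      Gᵀ * A * G = fromBlocks (diagonal σ) 0 0 (diagonal fun i ↦ (σ i)⁻¹) := by
  obtain ⟨B, hB, hAB⟩ := hA.exists_isUnit_eq_transpose_mul_self
  obtain ⟨B', hBB', hB'B⟩ : ∃ B', B * B' = 1 ∧ B' * B = 1 :=
    ⟨_, hB.mul_val_inv, hB.val_inv_mul⟩
  have hN : B * J (Fin n) ℝ * B' * (B * J (Fin n) ℝ * B') = -1 :=
    calc _ = B * (J (Fin n) ℝ * J (Fin n) ℝ) * B' := by
          simp only [Matrix.mul_assoc, ← Matrix.mul_assoc B' B, hB'B, Matrix.one_mul]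
      _ = -1 := by rw [J_squared, Matrix.mul_neg, Matrix.mul_one, Matrix.neg_mul, hBB']
  obtain ⟨P, σ, hσ, hNP, hPP⟩ :=
    exists_mul_eq_mul_J _ hN (n := n) (by simp [Fintype.card_sum, two_mul])
  have hGAG :
      (B' * P)ᵀ * A * (B' * P) = fromBlocks (diagonal σ) 0 0 (diagonal fun i ↦ (σ i)⁻¹) := by
    rw [← hPP, hAB]
    calc _ = Pᵀ * (B * B')ᵀ * (B * B') * P := by simp only [transpose_mul, Matrix.mul_assoc]
      _ = Pᵀ * P := by rw [hBB', transpose_one, Matrix.mul_one, Matrix.mul_one]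
  have hD : IsUnit (fromBlocks (diagonal σ) 0 0 (diagonal fun i ↦ (σ i)⁻¹)).det := by
    simp [Finset.prod_ne_zero_iff, (hσ _).ne']
  refine ⟨B' * P, σ, hσ, ?_, ?_, hGAG⟩
  · rw [← hGAG, det_mul, det_mul] at hD
    exact (isUnit_iff_isUnit_det _).2 (isUnit_of_mul_isUnit_right hD)
  · calc J (Fin n) ℝ * (B' * P) = B' * (B * J (Fin n) ℝ * B') * P := by
          simp only [← Matrix.mul_assoc, hB'B, Matrix.one_mul]
      _ = B' * P * J (Fin n) ℝ := by rw [Matrix.mul_assoc, hNP, Matrix.mul_assoc]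

end Matrix

/-- F11 folding: a real symmetric positive definite `2n × 2n` matrix is congruent by a
realified complex matrix `W = [[X, Y], [-Y, X]]` (with `X + iY` invertible) to
`diag(Σ, Σ⁻¹)` with `Σ` positive diagonal. -/
theorem f11_folding (n : ℕ)
    (A : Matrix (Fin n ⊕ Fin n) (Fin n ⊕ Fin n) ℝ) (hA : A.PosDef) :
    ∃ (X Y : Matrix (Fin n) (Fin n) ℝ) (σ : Fin n → ℝ),
      IsUnit (X.map (Complex.ofReal) + Complex.I • Y.map (Complex.ofReal)).det ∧
      (∀ i, 0 < σ i) ∧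
      A = (Matrix.fromBlocks X Y (-Y) X)ᵀ *
          Matrix.fromBlocks (Matrix.diagonal σ) 0 0
            (Matrix.diagonal fun i => (σ i)⁻¹) *
          Matrix.fromBlocks X Y (-Y) X := by
  obtain ⟨G, σ, hσ, hG, hJG, hGAG⟩ := hA.exists_commute_J_transpose_mul_mul_eq
  obtain ⟨X, Y, hXY, hAXY⟩ := exists_eq_transpose_mul_mul_of_commute_J hG hJG hGAG
  exact ⟨X, Y, σ, hXY, hσ, hAXY⟩
end

section
/- (F12 folding, decoupling) For any n×n complex Hermitian positive definite matrix A with n = 2m, there exist a real invertible n×n matrix V and real numbers c_1,…,c_m > 0, s_1,…,s_m such that Re(A) = Vᵀ diag(c_1, c_1, …, c_m, c_m) V and Im(A) = Vᵀ K V, where K is the block diagonal matrix with 2×2 blocks [[0, s_l], [−s_l, 0]], and moreover c_l = cosh θ_l, s_l = sinh θ_l for some real θ_l. -/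
/-!
Write `S = Re A`, which is positive definite, and `T = Im A`, which is skew-symmetric. Factoring
`S = WᵀW`, the matrix `W⁻ᵀ T W⁻¹` is real skew-symmetric, hence orthogonally similar to the
block-diagonal matrix `K(μ)` with blocks `[[0, μ_l], [-μ_l, 0]]`; this gives one invertible `U`
with `S = UᵀU` and `T = Uᵀ K(μ) U`. Then `A = U*(1 + i K(μ))U`, so `1 + i K(μ)` is positive
definite and its `2 × 2` principal minors `1 - μ_l²` are positive. Writing `μ_l = tanh θ_l` and
rescaling the `l`-th block by `(cosh θ_l)^(-1/2)` turns `(1, K(μ))` into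
`(diag(cosh θ), K(sinh θ))`.
-/

open Matrix Module
open scoped ComplexOrder InnerProductSpace MatrixOrder

section Orthonormal

variable {𝕜 E κ : Type*} [RCLike 𝕜] [NormedAddCommGroup E] [InnerProductSpace 𝕜 E]

theorem Orthonormal.finCases_prod {m : ℕ} {e : κ → E} {u : Fin m × κ → E}
    (he : Orthonormal 𝕜 e) (hu : Orthonormal 𝕜 u) (heu : ∀ a q, ⟪e a, u q⟫_𝕜 = 0) :
    Orthonormal 𝕜
      (fun p : Fin (m + 1) × κ => (Fin.cases (e p.2) (fun l => u (l, p.2)) p.1 : E)) := by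
  classical
  rw [orthonormal_iff_ite] at he hu ⊢
  rintro ⟨i, a⟩ ⟨j, b⟩
  induction i using Fin.cases <;> induction j using Fin.cases
  · simpa [Prod.ext_iff] using he a b
  · simp [heu, Prod.ext_iff, (Fin.succ_ne_zero _).symm]
  · simp [inner_eq_zero_symm.mp (heu _ _), Prod.ext_iff, Fin.succ_ne_zero]
  · simpa [Prod.ext_iff] using hu (_, a) (_, b)

theorem LinearMap.IsSymmetric.exists_eigenvector_of_ne_zero [FiniteDimensional 𝕜 E]
    {T : E →ₗ[𝕜] E} (hT : T.IsSymmetric) (h : T ≠ 0) :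
    ∃ (t : ℝ) (w : E), t ≠ 0 ∧ ‖w‖ = 1 ∧ T w = (t : 𝕜) • w := by
  obtain ⟨i, hi⟩ : ∃ i, hT.eigenvalues rfl i ≠ 0 := by
    by_contra! h0
    exact h <| (hT.eigenvectorBasis rfl).toBasis.ext fun i => by
      simp [hT.apply_eigenvectorBasis, h0]
  exact ⟨_, _, hi, (hT.eigenvectorBasis rfl).orthonormal.1 i, hT.apply_eigenvectorBasis rfl i⟩

end Orthonormal

namespace LinearMap

variable {E : Type*} [NormedAddCommGroup E] [InnerProductSpace ℝ E]

def IsSkewSymmetric (f : E →ₗ[ℝ] E) : Prop :=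
  ∀ x y, ⟪f x, y⟫_ℝ = -⟪x, f y⟫_ℝ

namespace IsSkewSymmetric

variable {f : E →ₗ[ℝ] E}

theorem inner_map_self (hf : f.IsSkewSymmetric) (x : E) : ⟪f x, x⟫_ℝ = 0 := by
  linarith [hf x x, real_inner_comm x (f x)]

theorem isSymmetric_neg_comp_self (hf : f.IsSkewSymmetric) : (-(f ∘ₗ f)).IsSymmetric :=
  fun x y => by
    simp only [neg_apply, comp_apply, inner_neg_left, inner_neg_right]
    linarith [hf (f x) y, hf x (f y)]

theorem inner_neg_comp_self_apply (hf : f.IsSkewSymmetric) (x : E) :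
    ⟪(-(f ∘ₗ f)) x, x⟫_ℝ = ‖f x‖ ^ 2 := by
  rw [neg_apply, comp_apply, inner_neg_left, hf, neg_neg, real_inner_self_eq_norm_sq]

theorem mapsTo_orthogonal (hf : f.IsSkewSymmetric) {K : Submodule ℝ E}
    (hK : ∀ x ∈ K, f x ∈ K) : ∀ x ∈ Kᗮ, f x ∈ Kᗮ := by
  intro x hx
  rw [Submodule.mem_orthogonal] at hx ⊢
  intro y hy
  rw [← neg_eq_zero, ← hf y x]
  exact hx _ (hK y hy)

theorem restrict (hf : f.IsSkewSymmetric) {K : Submodule ℝ E} (hK : ∀ x ∈ K, f x ∈ K) :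
    (f.restrict hK).IsSkewSymmetric :=
  fun x y => hf x y

theorem exists_orthonormal_pair [FiniteDimensional ℝ E] (hf : f.IsSkewSymmetric)
    (hE : 2 ≤ finrank ℝ E) :
    ∃ (e : Fin 2 → E) (μ : ℝ), Orthonormal ℝ e ∧ f (e 0) = -μ • e 1 ∧ f (e 1) = μ • e 0 := by
  by_cases hf0 : f = 0
  · let b := stdOrthonormalBasis ℝ E
    exact ⟨fun i => b (Fin.castLE hE i), 0, b.orthonormal.comp _ (Fin.castLE_injective hE),
      by simp [hf0], by simp [hf0]⟩
  have hg : -(f ∘ₗ f) ≠ 0 := fun h => hf0 <| ext fun x => by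
    simpa [h] using (hf.inner_neg_comp_self_apply x).symm
  -- `w` is a unit eigenvector of `-f²` with eigenvalue `‖f w‖² ≠ 0`, so `w` and `f w / ‖f w‖`
  -- span an `f`-invariant plane.
  obtain ⟨t, w, ht, hw, hgw⟩ := hf.isSymmetric_neg_comp_self.exists_eigenvector_of_ne_zero hg
  obtain ⟨μ, hμ_def⟩ : ∃ μ, μ = ‖f w‖ := ⟨_, rfl⟩
  have hμt : μ ^ 2 = t := by
    rw [hμ_def, ← hf.inner_neg_comp_self_apply, hgw, real_inner_smul_left,
      real_inner_self_eq_norm_sq, hw]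
    simp
  have hμ : 0 < μ := lt_of_le_of_ne (hμ_def ▸ norm_nonneg _) <| by
    rintro rfl
    exact ht (by simpa using hμt.symm)
  replace hgw : -f (f w) = t • w := by simpa using hgw
  have hffw : f (f w) = -(μ ^ 2 • w) := by rw [hμt, ← hgw, neg_neg]
  have hwfw : ⟪w, f w⟫_ℝ = 0 := by rw [real_inner_comm]; exact hf.inner_map_self w
  refine ⟨![w, -μ⁻¹ • f w], μ, ?_, ?_, ?_⟩
  · simp [orthonormal_vecCons_iff, hw, inner_smul_right, hwfw, norm_smul, ← hμ_def,
      abs_of_pos hμ, hμ.ne']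
  · simp [smul_smul, hμ.ne']
  · simp [hffw, smul_smul, hμ.ne', pow_two]

theorem exists_orthonormal_normal_form [FiniteDimensional ℝ E] (hf : f.IsSkewSymmetric)
    {m : ℕ} (hE : finrank ℝ E = 2 * m) :
    ∃ (v : Fin m × Fin 2 → E) (μ : Fin m → ℝ), Orthonormal ℝ v ∧
      ∀ l, f (v (l, 0)) = -μ l • v (l, 1) ∧ f (v (l, 1)) = μ l • v (l, 0) := by
  induction m generalizing E with
  | zero => exact ⟨fun p => p.1.elim0, finZeroElim, .of_isEmpty _, fun l => l.elim0⟩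
  | succ m ih =>
    obtain ⟨e, μ₀, he, he0, he1⟩ := hf.exists_orthonormal_pair (by omega)
    set P := Submodule.span ℝ (Set.range e)
    have hP : ∀ x ∈ P, f x ∈ P := fun x hx => by
      refine (Submodule.span_le (p := P.comap f)).mpr ?_ hx
      rintro _ ⟨i, rfl⟩
      fin_cases i
      · simpa [he0] using P.smul_mem (-μ₀) (Submodule.subset_span ⟨1, rfl⟩)
      · simpa [he1] using P.smul_mem μ₀ (Submodule.subset_span ⟨0, rfl⟩)
    have hPdim : finrank ℝ Pᗮ = 2 * m := by
      have := P.finrank_add_finrank_orthogonal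
      rw [finrank_span_eq_card he.linearIndependent] at this
      simp only [Fintype.card_fin] at this
      omega
    obtain ⟨u, μ, hu, hfu⟩ := ih (hf.restrict (hf.mapsTo_orthogonal hP)) hPdim
    refine ⟨fun p => Fin.cases (e p.2) (fun l => (u (l, p.2) : E)) p.1, Fin.cases μ₀ μ,
      he.finCases_prod (hu.comp_linearIsometry Pᗮ.subtypeₗᵢ) fun a q =>
        Submodule.inner_right_of_mem_orthogonal (Submodule.subset_span (Set.mem_range_self a))
          (u q).2,
      fun l => ?_⟩
    induction l using Fin.cases with
    | zero => exact ⟨he0, he1⟩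
    | succ l => exact ⟨congrArg Subtype.val (hfu l).1, congrArg Subtype.val (hfu l).2⟩

end IsSkewSymmetric

end LinearMap

section BlockSkew

variable {m : ℕ}

def blockSkew (s : Fin m → ℝ) : Matrix (Fin m × Fin 2) (Fin m × Fin 2) ℝ :=
  Matrix.of fun i j =>
    if i.1 = j.1 ∧ i.2 = 0 ∧ j.2 = 1 then s i.1
    else if i.1 = j.1 ∧ i.2 = 1 ∧ j.2 = 0 then -s i.1
    else 0

theorem mul_blockSkew_apply_zero {ι : Type*} (Q : Matrix ι (Fin m × Fin 2) ℝ)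
    (s : Fin m → ℝ) (i : ι) (l : Fin m) :
    (Q * blockSkew s) i (l, 0) = -s l * Q i (l, 1) := by
  simp [mul_apply, Fintype.sum_prod_type, blockSkew, mul_comm]

theorem mul_blockSkew_apply_one {ι : Type*} (Q : Matrix ι (Fin m × Fin 2) ℝ)
    (s : Fin m → ℝ) (i : ι) (l : Fin m) :
    (Q * blockSkew s) i (l, 1) = s l * Q i (l, 0) := by
  simp [mul_apply, Fintype.sum_prod_type, blockSkew, mul_comm]

theorem diagonal_mul_blockSkew_mul_diagonal (d s : Fin m → ℝ) :
    diagonal (fun i : Fin m × Fin 2 => d i.1) * blockSkew s * diagonal (fun i => d i.1) =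
      blockSkew (fun l => d l * s l * d l) := by
  ext i j
  simp only [diagonal_mul, mul_diagonal, blockSkew, of_apply]
  split_ifs with h₁ h₂
  · rw [← h₁.1]
  · rw [← h₂.1]; ring
  · ring

theorem exists_orthogonal_conj_blockSkew (J : Matrix (Fin m × Fin 2) (Fin m × Fin 2) ℝ)
    (hJ : Jᵀ = -J) :
    ∃ (Q : Matrix (Fin m × Fin 2) (Fin m × Fin 2) ℝ) (μ : Fin m → ℝ),
      Q * Qᵀ = 1 ∧ J = Q * blockSkew μ * Qᵀ := by
  have hskew : (toEuclideanLin J).IsSkewSymmetric := fun x y => by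
    simp only [EuclideanSpace.inner_eq_star_dotProduct, toLpLin_apply, star_trivial]
    rw [dotProduct_mulVec, ← mulVec_transpose, hJ, neg_mulVec, neg_dotProduct, dotProduct_comm]
  obtain ⟨v, μ, hv, hJv⟩ := hskew.exists_orthonormal_normal_form (m := m) (by simp [mul_comm])
  let Q : Matrix (Fin m × Fin 2) (Fin m × Fin 2) ℝ := of fun i j => v j i
  have hQ : Qᵀ * Q = 1 := by
    ext i j
    simpa [Q, mul_apply, EuclideanSpace.inner_eq_star_dotProduct, dotProduct, mul_comm,
      one_apply] using orthonormal_iff_ite.mp hv i j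
  have hJQ : J * Q = Q * blockSkew μ := by
    ext i ⟨l, k⟩
    revert k
    refine Fin.forall_fin_two.mpr ⟨?_, ?_⟩
    · rw [mul_blockSkew_apply_zero]
      simpa [Q, mul_apply, mulVec, dotProduct]
        using congrArg (· i) (hJv l).1
    · rw [mul_blockSkew_apply_one]
      simpa [Q, mul_apply, mulVec, dotProduct]
        using congrArg (· i) (hJv l).2
  refine ⟨Q, μ, mul_eq_one_comm.mp hQ, ?_⟩
  rw [← hJQ, Matrix.mul_assoc, mul_eq_one_comm.mp hQ, Matrix.mul_one]

end BlockSkew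

theorem Matrix.PosDef.exists_isUnit_det_eq_transpose_mul_self {n : Type*} [Fintype n]
    [DecidableEq n] {S : Matrix n n ℝ} (hS : S.PosDef) : ∃ W, IsUnit W.det ∧ S = Wᵀ * W := by
  refine ⟨CFC.sqrt S, ?_, ?_⟩
  · refine isUnit_iff_ne_zero.mpr fun h => hS.det_pos.ne' ?_
    rw [← CFC.sqrt_mul_sqrt_self S hS.posSemidef.nonneg, det_mul, h, zero_mul]
  · rw [← conjTranspose_eq_transpose_of_trivial, (CFC.sqrt_nonneg S).posSemidef.1.eq,
      CFC.sqrt_mul_sqrt_self S hS.posSemidef.nonneg]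

theorem exists_transpose_mul_self_and_blockSkew {m : ℕ}
    {S T : Matrix (Fin m × Fin 2) (Fin m × Fin 2) ℝ} (hS : S.PosDef) (hT : Tᵀ = -T) :
    ∃ (U : Matrix (Fin m × Fin 2) (Fin m × Fin 2) ℝ) (μ : Fin m → ℝ),
      IsUnit U.det ∧ S = Uᵀ * U ∧ T = Uᵀ * blockSkew μ * U := by
  obtain ⟨W, hW, rfl⟩ := hS.exists_isUnit_det_eq_transpose_mul_self
  have hJ : ((W⁻¹)ᵀ * T * W⁻¹)ᵀ = -((W⁻¹)ᵀ * T * W⁻¹) := by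
    simp [transpose_mul, hT, Matrix.mul_assoc]
  obtain ⟨Q, μ, hQ, hJQ⟩ := exists_orthogonal_conj_blockSkew _ hJ
  refine ⟨Qᵀ * W, μ, ?_, ?_, ?_⟩
  · rw [det_mul, det_transpose]
    exact (isUnit_det_of_right_inverse hQ).mul hW
  · rw [transpose_mul, transpose_transpose, Matrix.mul_assoc, ← Matrix.mul_assoc Q, hQ,
      Matrix.one_mul]
  · have hTW : T = Wᵀ * ((W⁻¹)ᵀ * T * W⁻¹) * W := by
      calc T = (W⁻¹ * W)ᵀ * T * (W⁻¹ * W) := by simp [nonsing_inv_mul _ hW]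
        _ = _ := by simp only [transpose_mul, Matrix.mul_assoc]
    rw [hTW, hJQ, transpose_mul, transpose_transpose]
    simp only [Matrix.mul_assoc]

theorem Matrix.PosDef.map_re {n : Type*} [Fintype n] {A : Matrix n n ℂ} (hA : A.PosDef) :
    (A.map Complex.re).PosDef := by
  refine .of_dotProduct_mulVec_pos (hA.1.map _ fun z => by simp) fun x hx => ?_
  have hxc : (fun i => (x i : ℂ)) ≠ 0 := by simpa [funext_iff] using hx
  have hquad : star x ⬝ᵥ A.map Complex.re *ᵥ x =
      RCLike.re (star (fun i => (x i : ℂ)) ⬝ᵥ A *ᵥ fun i => (x i : ℂ)) := by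
    simp [dotProduct, mulVec, Finset.mul_sum]
  exact hquad ▸ hA.re_dotProduct_pos hxc

theorem Matrix.IsHermitian.transpose_map_im {n : Type*} {A : Matrix n n ℂ}
    (hA : A.IsHermitian) : (A.map Complex.im)ᵀ = -A.map Complex.im := by
  ext i j
  have := congrArg Complex.im (hA.apply i j)
  simp only [map_apply, transpose_apply, neg_apply, ← this]
  simp

theorem sq_lt_one_of_posDef {m : ℕ} {A : Matrix (Fin m × Fin 2) (Fin m × Fin 2) ℂ}
    (hA : A.PosDef) {U : Matrix (Fin m × Fin 2) (Fin m × Fin 2) ℝ} (hU : IsUnit U.det)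
    {μ : Fin m → ℝ} (hre : A.map Complex.re = Uᵀ * U)
    (him : A.map Complex.im = Uᵀ * blockSkew μ * U) (l : Fin m) : μ l ^ 2 < 1 := by
  set M := 1 + Complex.I • (blockSkew μ).map Complex.ofRealHom
  have hAM : A = star (U.map Complex.ofRealHom) * M * U.map Complex.ofRealHom := by
    have hsplit : A = (A.map Complex.re).map Complex.ofRealHom +
        Complex.I • (A.map Complex.im).map Complex.ofRealHom := by
      ext i j
      simp [Complex.ext_iff]
    have hstar : star (U.map Complex.ofRealHom) = Uᵀ.map Complex.ofRealHom := by
      ext i j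
      simp
    rw [hsplit, hre, him, hstar, Matrix.map_mul, Matrix.map_mul, Matrix.map_mul]
    simp only [M, Matrix.mul_add, Matrix.add_mul, Matrix.mul_one, Matrix.mul_smul,
      Matrix.smul_mul]
  have hM : M.PosDef := by
    refine (IsUnit.posDef_star_left_conjugate_iff ?_).mp (hAM ▸ hA)
    rw [isUnit_iff_isUnit_det, ← RingHom.mapMatrix_apply, ← RingHom.map_det]
    exact hU.map _
  have hinj : Function.Injective ![(l, (0 : Fin 2)), (l, 1)] := by
    intro a b
    fin_cases a <;> fin_cases b <;> simp
  have hminor :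
      (M.submatrix ![(l, 0), (l, 1)] ![(l, 0), (l, 1)]).det = ((1 - μ l ^ 2 : ℝ) : ℂ) := by
    rw [det_fin_two]
    simp [M, blockSkew, mul_mul_mul_comm _ (μ l : ℂ), sq, ← sub_eq_add_neg]
  have hdet := (hM.submatrix hinj).det_pos
  rw [hminor, Complex.zero_lt_real] at hdet
  linarith

theorem exists_cosh_sinh_rescaling {m : ℕ} {μ : Fin m → ℝ} (hμ : ∀ l, μ l ^ 2 < 1) :
    ∃ (θ : Fin m → ℝ) (D : Matrix (Fin m × Fin 2) (Fin m × Fin 2) ℝ), IsUnit D.det ∧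
      Dᵀ * diagonal (fun i => Real.cosh (θ i.1)) * D = 1 ∧
      Dᵀ * blockSkew (fun l => Real.sinh (θ l)) * D = blockSkew μ := by
  set θ := fun l => Real.artanh (μ l)
  set d := fun l => (√(Real.cosh (θ l)))⁻¹
  have hd : ∀ l, d l * d l = (Real.cosh (θ l))⁻¹ := fun l => by
    rw [← mul_inv, Real.mul_self_sqrt (Real.cosh_pos _).le]
  have htanh : ∀ l, Real.sinh (θ l) / Real.cosh (θ l) = μ l := fun l => by
    rw [← Real.tanh_eq_sinh_div_cosh, Real.tanh_artanh]
    exact ⟨by nlinarith [hμ l], by nlinarith [hμ l]⟩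
  refine ⟨θ, diagonal fun i => d i.1, ?_, ?_, ?_⟩
  · rw [det_diagonal, isUnit_iff_ne_zero, Finset.prod_ne_zero_iff]
    exact fun i _ => inv_ne_zero (Real.sqrt_pos.mpr (Real.cosh_pos _)).ne'
  · rw [diagonal_transpose, diagonal_mul_diagonal, diagonal_mul_diagonal, ← diagonal_one]
    congr 1
    funext i
    rw [mul_right_comm, hd, inv_mul_cancel₀ (Real.cosh_pos _).ne']
  · rw [diagonal_transpose, diagonal_mul_blockSkew_mul_diagonal]
    congr 1
    funext l
    rw [mul_right_comm, hd, ← htanh, div_eq_mul_inv, mul_comm]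

/-- F12 folding (decoupling): for a complex Hermitian positive definite matrix `A` of
even size `n = 2m` (index set `Fin m × Fin 2`), there is a single real invertible
matrix `V` and reals `θ_l` with `Re(A) = Vᵀ diag(cosh θ_1, cosh θ_1, …) V` and
`Im(A) = Vᵀ K V`, where `K` has `2 × 2` diagonal blocks `[[0, sinh θ_l], [-sinh θ_l, 0]]`. -/
theorem f12_folding_decoupling (m : ℕ)
    (A : Matrix (Fin m × Fin 2) (Fin m × Fin 2) ℂ) (hA : A.PosDef) :
    ∃ (V : Matrix (Fin m × Fin 2) (Fin m × Fin 2) ℝ) (θ : Fin m → ℝ),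
      IsUnit V.det ∧
      A.map Complex.re =
        Vᵀ * Matrix.diagonal (fun i : Fin m × Fin 2 => Real.cosh (θ i.1)) * V ∧
      A.map Complex.im =
        Vᵀ * (Matrix.of fun i j : Fin m × Fin 2 =>
          if i.1 = j.1 ∧ i.2 = 0 ∧ j.2 = 1 then Real.sinh (θ i.1)
          else if i.1 = j.1 ∧ i.2 = 1 ∧ j.2 = 0 then -Real.sinh (θ i.1)
          else 0) * V := by
  obtain ⟨U, μ, hU, hre, him⟩ :=
    exists_transpose_mul_self_and_blockSkew hA.map_re hA.1.transpose_map_im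
  obtain ⟨θ, D, hD, hcosh, hsinh⟩ :=
    exists_cosh_sinh_rescaling (sq_lt_one_of_posDef hA hU hre him)
  refine ⟨D * U, θ, by simpa only [det_mul] using hD.mul hU, ?_, ?_⟩
  · calc A.map Complex.re = Uᵀ * (Dᵀ * diagonal (fun i => Real.cosh (θ i.1)) * D) * U := by
          rw [hre, hcosh, Matrix.mul_one]
      _ = (D * U)ᵀ * diagonal (fun i => Real.cosh (θ i.1)) * (D * U) := by
          simp only [transpose_mul, Matrix.mul_assoc]
  · calc A.map Complex.im = Uᵀ * (Dᵀ * blockSkew (fun l => Real.sinh (θ l)) * D) * U := by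
          rw [him, hsinh]
      _ = (D * U)ᵀ * blockSkew (fun l => Real.sinh (θ l)) * (D * U) := by
          simp only [transpose_mul, Matrix.mul_assoc]
end
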